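/- arXiv:0912.0582 — 3 statements merged into one kernel-verified Lean document; each statement's English description precedes it below -/
import Mathlib

section
/- If f : X → Y is orthogonal to B for all L-local groups B, then f is an L-equivalence. -/
-- preamble for localization-based statements
open CategoryTheory Cardinal

/-- A localization functor on the category of abelian groups: a functor `L`
with a natural transformation `unit : Id ⟶ L` such that `unit.app (L X) = L.map (unit.app X)`
and this map is an isomorphism. -/
structure AbLocalization where
  L : AddCommGrpCat ⥤ AddCommGrpCat
  unit : 𝟭 AddCommGrpCat ⟶ L
  unit_app_eq_map : ∀ X : AddCommGrpCat, unit.app (L.obj X) = L.map (unit.app X)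
  isIso_unit_app : ∀ X : AddCommGrpCat, IsIso (unit.app (L.obj X))

/-- `B` is `L`-local if the unit map at `B` is an isomorphism. -/
def AbLocalization.Local (T : AbLocalization) (B : AddCommGrpCat) : Prop :=
  IsIso (T.unit.app B)

/-- `f` is an `L`-equivalence if `L f` is an isomorphism. -/
def AbLocalization.Equiv (T : AbLocalization) {X Y : AddCommGrpCat} (f : X ⟶ Y) : Prop :=
  IsIso (T.L.map f)

/-- `f : X ⟶ Y` is orthogonal to `B` if precomposition with `f` gives a bijection
`Hom(Y,B) → Hom(X,B)`. -/
def Orthogonal {X Y : AddCommGrpCat} (f : X ⟶ Y) (B : AddCommGrpCat) : Prop :=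
  Function.Bijective (fun g : Y ⟶ B => f ≫ g)

/-!
Because `L` is idempotent (`η_{LX} = L η_X` is invertible), a map out of `L Y` into a local group is
determined by its restriction along `η_Y`. Orthogonality of `f` to the local group `L X` lifts `η_X`
to `g : Y ⟶ L X` with `f ≫ g = η_X`, and orthogonality to `L Y` forces `g ≫ L f = η_Y`; then
`L g ≫ η_{LX}⁻¹` is inverse to `L f`.
-/

namespace AbLocalization

variable (T : AbLocalization)

theorem local_obj (X : AddCommGrpCat) : T.Local (T.L.obj X) :=
  T.isIso_unit_app X

theorem map_unit_app_comp {Y B : AddCommGrpCat} (k : T.L.obj Y ⟶ B) :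
    T.L.map (T.unit.app Y ≫ k) = k ≫ T.unit.app B := by
  rw [T.L.map_comp, ← T.unit_app_eq_map]
  exact (T.unit.naturality k).symm

theorem unit_app_comp_injective {Y B : AddCommGrpCat} (hB : T.Local B) :
    Function.Injective (fun k : T.L.obj Y ⟶ B => T.unit.app Y ≫ k) := by
  have : IsIso (T.unit.app B) := hB
  intro k k' hk
  rw [← cancel_mono (T.unit.app B), ← T.map_unit_app_comp k, ← T.map_unit_app_comp k']
  exact congrArg T.L.map hk

theorem isIso_map_of_comp_eq_unit_app {X Y : AddCommGrpCat} {f : X ⟶ Y} {g : Y ⟶ T.L.obj X}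
    (hfg : f ≫ g = T.unit.app X) (hgf : g ≫ T.L.map f = T.unit.app Y) : IsIso (T.L.map f) := by
  have : IsIso (T.unit.app (T.L.obj X)) := T.isIso_unit_app X
  refine ⟨T.L.map g ≫ inv (T.unit.app (T.L.obj X)), ?_, ?_⟩
  · rw [← Category.assoc, ← T.L.map_comp, hfg, ← T.unit_app_eq_map, IsIso.hom_inv_id]
  · apply T.unit_app_comp_injective (T.local_obj Y)
    have hg : T.unit.app Y ≫ T.L.map g = g ≫ T.unit.app (T.L.obj X) :=
      (T.unit.naturality g).symm
    dsimp only
    rw [Category.comp_id, ← Category.assoc, ← Category.assoc, hg, Category.assoc g,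
      IsIso.hom_inv_id, Category.comp_id, hgf]

end AbLocalization

/-- If `f ⊥ B` for every `L`-local group `B`, then `f` is an `L`-equivalence. -/
theorem equivalence_of_orthogonal_all_local (T : AbLocalization) {X Y : AddCommGrpCat} (f : X ⟶ Y)
    (h : ∀ B : AddCommGrpCat, T.Local B → Orthogonal f B) : T.Equiv f := by
  obtain ⟨g, hfg⟩ := (h _ (T.local_obj X)).2 (T.unit.app X)
  have hgf : g ≫ T.L.map f = T.unit.app Y := by
    apply (h _ (T.local_obj Y)).1
    have hf : T.unit.app X ≫ T.L.map f = f ≫ T.unit.app Y :=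
      (T.unit.naturality f).symm
    simpa only [← Category.assoc, hfg] using hf
  exact T.isIso_map_of_comp_eq_unit_app hfg hgf
end

section
/- If the direct sum ⊕_κ D of κ copies of an abelian group D is L-local for some infinite cardinal κ, then ⊕_α D is L-local for every infinite cardinal α. -/
-- preamble for localization-based statements
open CategoryTheory Cardinal

/-- `D^ι_{<λ}`: the subgroup of `∏_ι D` of elements whose support has cardinality `< lam`,
for an infinite cardinal `lam`. -/
def boundedSupport (ι : Type) (D : Type) [AddCommGroup D] (lam : Cardinal)
    (hlam : Cardinal.aleph0 ≤ lam) : AddSubgroup (ι → D) where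
  carrier := {x | Cardinal.mk {i | x i ≠ 0} < lam}
  zero_mem' := by
    have h : {i : ι | (0 : ι → D) i ≠ 0} = ∅ := by ext i; simp
    simp only [Set.mem_setOf_eq, h, Cardinal.mk_emptyCollection]
    exact lt_of_lt_of_le Cardinal.aleph0_pos hlam
  add_mem' := by
    intro x y hx hy
    have hsub : {i : ι | (x + y) i ≠ 0} ⊆ {i | x i ≠ 0} ∪ {i | y i ≠ 0} := by
      intro i hi
      by_contra h
      simp only [Set.mem_union, Set.mem_setOf_eq, not_or, not_not] at h
      exact hi (by simp [Pi.add_apply, h.1, h.2])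
    calc Cardinal.mk {i : ι | (x + y) i ≠ 0}
        ≤ Cardinal.mk ↥({i : ι | x i ≠ 0} ∪ {i | y i ≠ 0}) := Cardinal.mk_le_mk_of_subset hsub
      _ ≤ Cardinal.mk {i : ι | x i ≠ 0} + Cardinal.mk {i : ι | y i ≠ 0} := Cardinal.mk_union_le _ _
      _ < lam := Cardinal.add_lt_of_lt hlam hx hy
  neg_mem' := by
    intro x hx
    have h : {i : ι | (-x) i ≠ 0} = {i | x i ≠ 0} := by ext i; simp
    simpa only [Set.mem_setOf_eq, h] using hx

/-! A group is local as soon as its unit admits a retraction, since it is then a retract of the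
local group `L B`. Both `D` and `⊕_ℕ D` are retracts of `⊕_κ D`, hence local. For any index set `ι`
the evaluations `⊕_ι D → D` lift to `L (⊕_ι D) → D` and together give a map `L (⊕_ι D) → ∏_ι D`
retracting the unit. Its image is finitely supported: along an injection `ℕ → ι` the lifts factor
through the lift `L (⊕_ι D) → ⊕_ℕ D` of the restriction, whose values have finite support. -/

abbrev finiteSupport (ι D : Type) [AddCommGroup D] : AddSubgroup (ι → D) :=
  boundedSupport ι D ℵ₀ le_rfl

namespace finiteSupport

variable {ι ι' D : Type} [AddCommGroup D]

theorem mem_iff {x : ι → D} : x ∈ finiteSupport ι D ↔ (Function.support x).Finite :=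
  lt_aleph0_iff_set_finite

def codRestrict {G : Type} [AddCommGroup G] (f : G →+ ι → D)
    (hf : ∀ g, (Function.support (f g)).Finite) : G →+ finiteSupport ι D :=
  f.codRestrict _ fun g => mem_iff.2 (hf g)

def eval (i : ι) : finiteSupport ι D →+ D :=
  (Pi.evalAddMonoidHom (fun _ => D) i).comp (finiteSupport ι D).subtype

def single [DecidableEq ι] (i : ι) : D →+ finiteSupport ι D :=
  codRestrict (AddMonoidHom.single (fun _ : ι => D) i) fun _ =>
    (Set.finite_singleton i).subset Pi.support_single_subset

def comap (u : ι' → ι) (hu : Function.Injective u) : finiteSupport ι D →+ finiteSupport ι' D :=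
  codRestrict (AddMonoidHom.pi fun n => eval (u n)) fun x =>
    (mem_iff.1 x.2).preimage hu.injOn

noncomputable def extendByZero (u : ι' → ι) : finiteSupport ι' D →+ finiteSupport ι D :=
  codRestrict ((Function.ExtendByZero.hom D u).comp (finiteSupport ι' D).subtype) fun x =>
    ((mem_iff.1 x.2).image u).subset Function.support_extend_zero_subset

noncomputable def retractOfInjective (u : ι' → ι) (hu : Function.Injective u) :
    Retract (AddCommGrpCat.of (finiteSupport ι' D)) (AddCommGrpCat.of (finiteSupport ι D)) where
  i := AddCommGrpCat.ofHom (extendByZero u)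
  r := AddCommGrpCat.ofHom (comap u hu)
  retract := by
    ext x n
    exact hu.extend_apply (x : ι' → D) 0 n

def retractSingle [DecidableEq ι] (i : ι) :
    Retract (AddCommGrpCat.of D) (AddCommGrpCat.of (finiteSupport ι D)) where
  i := AddCommGrpCat.ofHom (single i)
  r := AddCommGrpCat.ofHom (eval i)
  retract := by
    ext d
    exact Pi.single_eq_same (M := fun _ => D) i d

end finiteSupport

namespace AbLocalization

variable {T : AbLocalization}

theorem Local.isIso {B : AddCommGrpCat} (hB : T.Local B) : IsIso (T.unit.app B) := hB

theorem Local.of_retract {B C : AddCommGrpCat} (h : Retract C B) (hB : T.Local B) :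
    T.Local C :=
  MorphismProperty.of_retract (P := .isomorphisms _) (NatTrans.retractArrowApp T.unit h) hB

variable (T)

theorem local_of_unit_comp_eq_id {B : AddCommGrpCat} (r : T.L.obj B ⟶ B)
    (hr : T.unit.app B ≫ r = 𝟙 B) : T.Local B :=
  Local.of_retract ⟨T.unit.app B, r, hr⟩ (T.isIso_unit_app B)

noncomputable def lift {A B : AddCommGrpCat} (hB : T.Local B) (φ : A ⟶ B) : T.L.obj A ⟶ B :=
  haveI := hB.isIso
  T.L.map φ ≫ inv (T.unit.app B)

theorem unit_comp_lift {A B : AddCommGrpCat} (hB : T.Local B) (φ : A ⟶ B) :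
    T.unit.app A ≫ T.lift hB φ = φ := by
  have := hB.isIso
  rw [lift, ← Category.assoc, ← T.unit.naturality φ, Category.assoc, IsIso.hom_inv_id,
    Category.comp_id, Functor.id_map]

theorem lift_comp {A B C : AddCommGrpCat} (hB : T.Local B) (hC : T.Local C) (φ : A ⟶ B)
    (ψ : B ⟶ C) : T.lift hB φ ≫ ψ = T.lift hC (φ ≫ ψ) := by
  have := hB.isIso
  have := hC.isIso
  have h : inv (T.unit.app B) ≫ ψ = T.L.map ψ ≫ inv (T.unit.app C) := by
    rw [IsIso.inv_comp_eq, ← Category.assoc, IsIso.eq_comp_inv]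
    exact T.unit.naturality ψ
  rw [lift, lift, Category.assoc, h, T.L.map_comp, Category.assoc]

variable {D : Type} [AddCommGroup D]

theorem finite_support_lift_eval {ι : Type} (hℕ : T.Local (.of (finiteSupport ℕ D)))
    (hD : T.Local (.of D)) (x : T.L.obj (.of (finiteSupport ι D))) :
    (Function.support fun i =>
      T.lift hD (AddCommGrpCat.ofHom (finiteSupport.eval i)) x).Finite := by
  by_contra hinf
  let e : ℕ ↪ _ := Set.Infinite.natEmbedding _ hinf
  have he : Function.Injective fun n => (e n).1 := fun m n h => e.injective (Subtype.ext h)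
  let g := T.lift hℕ (AddCommGrpCat.ofHom (finiteSupport.comap _ he))
  have hgx (n : ℕ) :
      (g x).1 n = T.lift hD (AddCommGrpCat.ofHom (finiteSupport.eval (e n).1)) x :=
    ConcreteCategory.congr_hom (T.lift_comp hℕ hD _ (AddCommGrpCat.ofHom (finiteSupport.eval n))) x
  refine Set.infinite_univ (α := ℕ) ((finiteSupport.mem_iff.1 (g x).2).subset fun n _ => ?_)
  rw [Function.mem_support, hgx]
  exact (e n).2

theorem local_finiteSupport_of_local_finiteSupport_nat (hℕ : T.Local (.of (finiteSupport ℕ D)))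
    (ι : Type) : T.Local (.of (finiteSupport ι D)) := by
  have hD : T.Local (.of D) := hℕ.of_retract (finiteSupport.retractSingle 0)
  let r : T.L.obj (.of (finiteSupport ι D)) ⟶ .of (finiteSupport ι D) :=
    AddCommGrpCat.ofHom <| finiteSupport.codRestrict
      (AddMonoidHom.pi fun i => (T.lift hD (AddCommGrpCat.ofHom (finiteSupport.eval i))).hom)
      (T.finite_support_lift_eval hℕ hD)
  refine T.local_of_unit_comp_eq_id r ?_
  ext a i
  exact ConcreteCategory.congr_hom (T.unit_comp_lift hD _) a

end AbLocalization

theorem local_directSum_all_general (T : AbLocalization) (D : Type) [AddCommGroup D]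
    (κ : Cardinal) (hκ : Cardinal.aleph0 ≤ κ)
    (h : T.Local (AddCommGrpCat.of ↥(boundedSupport κ.out D Cardinal.aleph0 le_rfl)))
    (α : Cardinal) :
    T.Local (AddCommGrpCat.of ↥(boundedSupport α.out D Cardinal.aleph0 le_rfl)) := by
  have : Infinite κ.out := by rwa [← Cardinal.aleph0_le_mk_iff, Cardinal.mk_out]
  let u : ℕ ↪ κ.out := Infinite.natEmbedding κ.out
  have hℕ := h.of_retract (finiteSupport.retractOfInjective u u.injective)
  exact T.local_finiteSupport_of_local_finiteSupport_nat hℕ α.out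

/-- If `⊕_κ D` is `L`-local for some infinite `κ`, then `⊕_α D` is `L`-local for every
infinite `α`.  Here `⊕_κ D = D^κ_{<ω}` is the finitely supported part of `∏_κ D`. -/
theorem local_directSum_all (T : AbLocalization) (D : Type) [AddCommGroup D]
    (κ : Cardinal) (hκ : Cardinal.aleph0 ≤ κ)
    (h : T.Local (AddCommGrpCat.of ↥(boundedSupport κ.out D Cardinal.aleph0 le_rfl)))
    (α : Cardinal) (hα : Cardinal.aleph0 ≤ α) :
    T.Local (AddCommGrpCat.of ↥(boundedSupport α.out D Cardinal.aleph0 le_rfl)) :=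
  local_directSum_all_general T D κ hκ h α
end

section
/- Let f : A → B be a homomorphism of abelian groups and κ an infinite regular cardinal greater than the number of generators of A (i.e., A is generated by fewer than κ elements). If D is f-local, then D^κ_{<κ}, the subgroup of ∏_κ D of functions with support of cardinality less than κ, is f-local. -/
/-!
`D^κ_{<κ}` sits inside the `f`-local group `∏_κ D`, so homomorphisms out of `B` into it are
determined by their restriction to `A`. Conversely, a homomorphism `g : A → D^κ_{<κ}` is
determined by the images of fewer than `κ` generators, each of support of size `< κ`; by
regularity of `κ` all values of `g` are supported on one set `T` with `#T < κ`. Outside `T`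
each coordinate of the extension `B → ∏_κ D` extends the zero map, hence vanishes, so the
extension lands in `D^κ_{<κ}`.
-/

open CategoryTheory Cardinal

theorem injective_precomp_of_mono {C : Type*} [Category C] {A B X Y : C} (f : A ⟶ B)
    (m : X ⟶ Y) [Mono m] (h : Function.Injective fun g : B ⟶ Y => f ≫ g) :
    Function.Injective fun g : B ⟶ X => f ≫ g := fun g₁ g₂ hg =>
  (cancel_mono m).1 <| h <| by simpa only [← Category.assoc] using congrArg (· ≫ m) hg

namespace Orthogonal

variable {A B : AddCommGrpCat} {f : A ⟶ B}

theorem pi {ι : Type} {D : ι → Type} [∀ i, AddCommGroup (D i)]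
    (hD : ∀ i, Orthogonal f (AddCommGrpCat.of (D i))) :
    Orthogonal f (AddCommGrpCat.of (∀ i, D i)) := by
  let π (i : ι) : AddCommGrpCat.of (∀ i, D i) ⟶ AddCommGrpCat.of (D i) :=
    AddCommGrpCat.ofHom (Pi.evalAddMonoidHom D i)
  constructor
  · intro g₁ g₂ hg
    have hcoord (i : ι) : g₁ ≫ π i = g₂ ≫ π i :=
      (hD i).1 <| by simpa only [← Category.assoc] using congrArg (· ≫ π i) hg
    ext b i
    exact congrArg (fun φ => φ.hom b) (hcoord i)
  · intro g
    choose h hh using fun i => (hD i).2 (g ≫ π i)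
    refine ⟨AddCommGrpCat.ofHom (AddMonoidHom.pi fun i => (h i).hom), ?_⟩
    ext a i
    exact congrArg (fun φ => φ.hom a) (hh i)

theorem addSubgroup {P : Type} [AddCommGroup P] (hP : Orthogonal f (AddCommGrpCat.of P))
    (H : AddSubgroup P)
    (hext : ∀ h : B ⟶ AddCommGrpCat.of P, (∀ a, h.hom (f.hom a) ∈ H) → ∀ b, h.hom b ∈ H) :
    Orthogonal f (AddCommGrpCat.of H) := by
  let m : AddCommGrpCat.of H ⟶ AddCommGrpCat.of P := AddCommGrpCat.ofHom H.subtype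
  have : Mono m := (AddCommGrpCat.mono_iff_injective m).2 H.subtype_injective
  refine ⟨injective_precomp_of_mono f m hP.1, fun g => ?_⟩
  obtain ⟨h, hh⟩ := hP.2 (g ≫ m)
  have hfh (a : A) : h.hom (f.hom a) = g.hom a := congrArg (fun φ => φ.hom a) hh
  refine ⟨AddCommGrpCat.ofHom (h.hom.codRestrict H (hext h fun a => hfh a ▸ (g.hom a).2)), ?_⟩
  ext a
  exact hfh a

end Orthogonal

universe u

theorem exists_support_subset_of_closure_eq_top {A ι : Type u} [AddCommGroup A]
    {D : ι → Type*} [∀ i, AddCommGroup (D i)] {κ : Cardinal.{u}} (hκ : κ.IsRegular)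
    {S : Set A} (hgen : AddSubgroup.closure S = ⊤) (hS : #S < κ) (g : A →+ ∀ i, D i)
    (hg : ∀ s ∈ S, #{i | g s i ≠ 0} < κ) :
    ∃ T : Set ι, #T < κ ∧ ∀ a, ∀ i ∉ T, g a i = 0 := by
  refine ⟨⋃ s : S, {i | g s i ≠ 0}, ?_, fun a i hi => ?_⟩
  · exact mk_iUnion_le_sum_mk.trans_lt (sum_lt_of_isRegular hκ hS fun s => hg s s.2)
  · have hS_ker : S ⊆ ((Pi.evalAddMonoidHom D i).comp g).ker := fun s hs => by
      by_contra hne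
      exact hi (Set.mem_iUnion.2 ⟨⟨s, hs⟩, hne⟩)
    have := (AddSubgroup.closure_le _).2 hS_ker
    rw [hgen] at this
    exact this (AddSubgroup.mem_top a)

theorem mem_boundedSupport_of_support_subset {ι D : Type} [AddCommGroup D] {lam : Cardinal}
    (hlam : ℵ₀ ≤ lam) {x : ι → D} {T : Set ι} (hT : #T < lam) (hx : ∀ i ∉ T, x i = 0) :
    x ∈ boundedSupport ι D lam hlam :=
  (mk_le_mk_of_subset fun i hi => not_not.1 (mt (hx i) hi)).trans_lt hT

/-- If `κ` is an infinite regular cardinal greater than the number of generators of `A`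
and `D` is `f`-local, then `D^κ_{<κ}` is `f`-local. -/
theorem boundedSupport_f_local {A B : AddCommGrpCat} (f : A ⟶ B)
    (κ : Cardinal) (hκ : κ.IsRegular)
    (S : Set A) (hgen : AddSubgroup.closure S = ⊤) (hS : Cardinal.mk S < κ)
    (D : Type) [AddCommGroup D] (hD : Orthogonal f (AddCommGrpCat.of D)) :
    Orthogonal f (AddCommGrpCat.of ↥(boundedSupport κ.out D κ hκ.aleph0_le)) := by
  set ι := κ.out
  refine (Orthogonal.pi fun _ : ι => hD).addSubgroup _ fun h hfh b => ?_
  obtain ⟨T, hT, hvanish⟩ := exists_support_subset_of_closure_eq_top hκ hgen hS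
    (h.hom.comp f.hom) fun s _ => hfh s
  let π (i : ι) : AddCommGrpCat.of (ι → D) ⟶ AddCommGrpCat.of D :=
    AddCommGrpCat.ofHom (Pi.evalAddMonoidHom _ i)
  have hcoord (i : ι) (hi : i ∉ T) : h ≫ π i = 0 :=
    hD.1 <| by ext a; exact hvanish a i hi
  exact mem_boundedSupport_of_support_subset _ hT fun i hi =>
    congrArg (fun φ => φ.hom b) (hcoord i hi)
end
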